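/- In the transfinite construction over a full model N: for every ordinal α and every term t, if H t ⇝_α ⊤ then t ⇝_α ⊤ or t ⇝_{α+1} ⊥. -/

import Mathlib

/-! Infrastructure: the transfinite model construction over a full model of
classical higher-order logic, following Czajka, "A semantic approach to illative
combinatory logic", Section 4. -/

namespace ILM

/-- Type-free λ-terms over a set `C` of primitive constants (de Bruijn representation). -/
inductive Tm (C : Type) : Type
  | var : Nat → Tm C
  | const : C → Tm C
  | app : Tm C → Tm C → Tm C
  | lam : Tm C → Tm C

namespace Tm

variable {C : Type}

/-- Renaming of free de Bruijn variables. -/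
def rename (f : Nat → Nat) : Tm C → Tm C
  | .var n => .var (f n)
  | .const c => .const c
  | .app a b => .app (a.rename f) (b.rename f)
  | .lam a => .lam (a.rename fun n => match n with | 0 => 0 | m + 1 => f m + 1)

/-- Shift all free variables up by one. -/
def lift (t : Tm C) : Tm C := t.rename (· + 1)

/-- Simultaneous substitution. -/
def bind (σ : Nat → Tm C) : Tm C → Tm C
  | .var n => σ n
  | .const c => .const c
  | .app a b => .app (a.bind σ) (b.bind σ)
  | .lam a => .lam (a.bind fun n => match n with | 0 => .var 0 | m + 1 => (σ m).lift)

/-- Substitution of `s` for the variable `0` (β-contraction of `(λ.t) s`). -/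
def subst0 (t s : Tm C) : Tm C := t.bind fun n => match n with | 0 => s | m + 1 => .var m

end Tm

/-- Extended types `T⁺`: the constructors generate all expressions
`o | B | arr | ω | ε`; the grammar `T⁺ ::= T₁ | ω | ε`, `T₁ ::= T | T₁→T₁ | ω→T₁`
is captured by the predicate `IsT1` below. -/
inductive ETy (B : Type) : Type
  | o : ETy B
  | base : B → ETy B
  | arr : ETy B → ETy B → ETy B
  | omega : ETy B
  | eps : ETy B
deriving DecidableEq

/-- Membership in `T₁` (so `T⁺ = T₁ ∪ {ω, ε}`). -/
inductive IsT1 {B : Type} : ETy B → Prop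
  | o : IsT1 .o
  | base (b : B) : IsT1 (.base b)
  | arr {τ1 τ2 : ETy B} : IsT1 τ1 → IsT1 τ2 → IsT1 (.arr τ1 τ2)
  | omegaArr {τ2 : ETy B} : IsT1 τ2 → IsT1 (.arr .omega τ2)

/-- Membership in `T⁺`. -/
def IsTp {B : Type} (τ : ETy B) : Prop := IsT1 τ ∨ τ = .omega ∨ τ = .eps

/-- The normalized arrow `τ₁ → τ₂`, implementing the notational conventions
`τ→ε = ε` (for `τ ≠ ε`), `ε→τ = ω` and `τ→ω = ω`. -/
def arrN {B : Type} : ETy B → ETy B → ETy B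
  | _, .omega => .omega
  | .eps, _ => .omega
  | _, .eps => .eps
  | τ1, τ2 => .arr τ1 τ2

/-- The rank of a type. -/
def rank {B : Type} : ETy B → Nat
  | .arr τ1 τ2 => max (rank τ1 + 1) (rank τ2)
  | _ => 1

/-- A canonical system over domains `D` for the base types: the primitive
constants `Σ⁺ = {Ξ, L} ∪ {A_τ : τ ∈ B} ∪ ⋃_τ Σ_τ`, the sets `T_τ` of canonical
terms of each type, the distinguished canonical constants `⊤, ⊥` of type `o`,
and the function `F` associating to each canonical term of a function type its
set-theoretic function, as constructed in the paper from a full model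
`N = ⟨{D_τ}, I⟩` of classical higher-order logic.  The fields axiomatize the
construction: the sets of canonical terms of distinct types are disjoint sets of
closed normal terms (`T_ω` is the set of all terms, `T_ε = ∅`), for `τ₁ ≠ ω`
the canonical terms of type `τ₁→τ₂` are constants corresponding bijectively
(via `F`) to *all* set-theoretic functions from `T_{τ₁}` to `T_{τ₂}` (this is
where fullness of `N` enters), the canonical terms of type `ω→τ₂` are the terms
`λx.ρ` with `ρ ∈ T_{τ₂}` (with `F` giving constant functions), the canonical
terms of base type `b` correspond bijectively to the domain `D b`, and those
of type `o` are exactly `⊤` and `⊥`. -/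
structure CanSys (B : Type) (D : B → Type) where
  /-- the primitive constants `Σ⁺` -/
  C : Type
  cXi : C
  cL : C
  cA : B → C
  /-- the sets `T_τ` of canonical terms -/
  TT : ETy B → Set (Tm C)
  /-- the canonical constant `⊤ ∈ Σ_o` -/
  top : Tm C
  /-- the canonical constant `⊥ ∈ Σ_o` -/
  bot : Tm C
  /-- `F τ₁ τ₂ ρ t` : the value at `t ∈ T_{τ₁}` of the function associated with
  the canonical term `ρ ∈ T_{τ₁→τ₂}` -/
  F : ETy B → ETy B → Tm C → Tm C → Tm C
  hXiL : cXi ≠ cL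
  hXiA : ∀ b, cXi ≠ cA b
  hLA : ∀ b, cL ≠ cA b
  hAinj : Function.Injective cA
  TT_omega : TT .omega = Set.univ
  TT_eps : TT .eps = ∅
  TT_invalid : ∀ τ : ETy B, ¬ IsT1 τ → τ ≠ .omega → TT τ = ∅
  TT_o : TT .o = {top, bot}
  top_ne_bot : top ≠ bot
  TT_const : ∀ τ : ETy B, IsT1 τ → (∀ τ2, τ ≠ .arr .omega τ2) →
    ∀ t ∈ TT τ, ∃ c : C, t = .const c
  TT_base_equiv : ∀ b : B, Nonempty (D b ≃ TT (.base b))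
  TT_omega_arr : ∀ τ2 : ETy B, IsT1 τ2 → TT (.arr .omega τ2) = Tm.lam '' TT τ2
  F_omega : ∀ τ2 : ETy B, ∀ ρ ∈ TT τ2, ∀ t : Tm C, F .omega τ2 (.lam ρ) t = ρ
  F_mapsto : ∀ τ1 τ2 : ETy B, IsT1 (.arr τ1 τ2) →
    ∀ ρ ∈ TT (.arr τ1 τ2), ∀ t ∈ TT τ1, F τ1 τ2 ρ t ∈ TT τ2
  F_full : ∀ τ1 τ2 : ETy B, IsT1 (.arr τ1 τ2) → τ1 ≠ .omega →
    ∀ g : Tm C → Tm C, (∀ t ∈ TT τ1, g t ∈ TT τ2) →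
      ∃ ρ ∈ TT (.arr τ1 τ2), ∀ t ∈ TT τ1, F τ1 τ2 ρ t = g t
  F_inj : ∀ τ1 τ2 : ETy B, IsT1 (.arr τ1 τ2) → τ1 ≠ .omega →
    ∀ ρ ∈ TT (.arr τ1 τ2), ∀ ρ' ∈ TT (.arr τ1 τ2),
      (∀ t ∈ TT τ1, F τ1 τ2 ρ t = F τ1 τ2 ρ' t) → ρ = ρ'
  TT_disj : ∀ τ τ' : ETy B, τ ≠ τ' → τ ≠ .omega → τ' ≠ .omega →
    Disjoint (TT τ) (TT τ')
  prim_notin : ∀ τ : ETy B, τ ≠ .omega →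
    Tm.const cXi ∉ TT τ ∧ Tm.const cL ∉ TT τ ∧ ∀ b, Tm.const (cA b) ∉ TT τ
  cover : ∀ c : C, c = cXi ∨ c = cL ∨ (∃ b, c = cA b) ∨
    ∃ τ : ETy B, τ ≠ .omega ∧ Tm.const c ∈ TT τ

namespace CanSys

variable {B : Type} {D : B → Type} (S : CanSys B D)

/-- The term `Ξ`. -/
def XiT : Tm S.C := .const S.cXi

/-- The term `L`. -/
def LT : Tm S.C := .const S.cL

/-- The term `A_b`. -/
def AT (b : B) : Tm S.C := .const (S.cA b)

/-- `K t = λx.t` with `x ∉ FV(t)`. -/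
def Kt (t : Tm S.C) : Tm S.C := .lam t.lift

/-- `H t = L (K t)`. -/
def Ht (t : Tm S.C) : Tm S.C := .app S.LT (S.Kt t)

/-- The term `H = λx. L (K x)`. -/
def Hterm : Tm S.C := .lam (.app S.LT (.lam (.var 1)))

/-- `F t₁ t₂`, written out according to the notational convention:
`λf. Ξ t₁ (λx. t₂ (f x))` if `t₂` is not a λ-abstraction, and
`λf. Ξ t₁ (λx. q₂[z/(f x)])` if `t₂ = λz. q₂`. -/
def Ft (t1 t2 : Tm S.C) : Tm S.C :=
  .lam (.app (.app S.XiT t1.lift)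
    (match t2 with
     | .lam b => .lam (b.bind fun n => match n with
         | 0 => .app (.var 1) (.var 0)
         | m + 1 => .var (m + 2))
     | t2 => .lam (.app t2.lift.lift (.app (.var 1) (.var 0)))))

end CanSys

mutual
  /-- One-step reduction `→_{≤α}` of the reduction system `R_α`: the context
  closure of β- and η-reduction together with the rules `c t → F(c)(ρ₁)` for
  canonical constants `c ∈ Σ_{τ₁→τ₂}` (`τ₁ ≠ ω`) and `t ≻_{<α} ρ₁`. -/
  inductive Step {B : Type} {D : B → Type} (S : CanSys B D) :
      Ordinal.{0} → Tm S.C → Tm S.C → Prop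
    | beta (α : Ordinal.{0}) (t s : Tm S.C) : Step S α (.app (.lam t) s) (t.subst0 s)
    | eta (α : Ordinal.{0}) (t : Tm S.C) : Step S α (.lam (.app t.lift (.var 0))) t
    | crule {α γ : Ordinal.{0}} (hγ : γ < α) {τ1 τ2 : ETy B} (h1 : τ1 ≠ .omega)
        {c : Tm S.C} (hc : c ∈ S.TT (.arr τ1 τ2)) {ρ1 : Tm S.C} (hρ1 : ρ1 ∈ S.TT τ1)
        {t : Tm S.C} (hs : Succ S γ t ρ1) :
        Step S α (.app c t) (S.F τ1 τ2 c ρ1)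
    | appL {α : Ordinal.{0}} {t t' : Tm S.C} (s : Tm S.C) :
        Step S α t t' → Step S α (.app t s) (.app t' s)
    | appR (t : Tm S.C) {α : Ordinal.{0}} {s s' : Tm S.C} :
        Step S α s s' → Step S α (.app t s) (.app t s')
    | lam {α : Ordinal.{0}} {t t' : Tm S.C} :
        Step S α t t' → Step S α (.lam t) (.lam t')

  /-- Many-step reduction `↠_{≤α}` (the reflexive-transitive closure of `→_{≤α}`). -/
  inductive Steps {B : Type} {D : B → Type} (S : CanSys B D) :
      Ordinal.{0} → Tm S.C → Tm S.C → Prop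
    | refl (α : Ordinal.{0}) (t : Tm S.C) : Steps S α t t
    | tail {α : Ordinal.{0}} {t u v : Tm S.C} :
        Steps S α t u → Step S α u v → Steps S α t v

  /-- `t ⇝_α ρ` : `t ↠_{≤α} t' ≻_α ρ` for some `t'`. -/
  inductive Lead {B : Type} {D : B → Type} (S : CanSys B D) :
      Ordinal.{0} → Tm S.C → Tm S.C → Prop
    | mk {α : Ordinal.{0}} {t t' ρ : Tm S.C} :
        Steps S α t t' → Succ S α t' ρ → Lead S α t ρ

  /-- `t ⇝_{<α} ρ` : `t ⇝_γ ρ` for some `γ < α`. -/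
  inductive LeadLt {B : Type} {D : B → Type} (S : CanSys B D) :
      Ordinal.{0} → Tm S.C → Tm S.C → Prop
    | mk {α γ : Ordinal.{0}} {t ρ : Tm S.C} :
        γ < α → Lead S γ t ρ → LeadLt S α t ρ

  /-- The typing relation `t ∼_α τ` (Definition 4.4), by the rules
  (A), (H), (Kω), (Kε), (F) and (Fω). -/
  inductive Sim {B : Type} {D : B → Type} (S : CanSys B D) :
      Ordinal.{0} → Tm S.C → ETy B → Prop
    | ofA (α : Ordinal.{0}) (b : B) : Sim S α (S.AT b) (.base b)
    | ofH (α : Ordinal.{0}) : Sim S α S.Hterm .o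
    | ofKom {α : Ordinal.{0}} {t : Tm S.C} :
        LeadLt S α t S.top → Sim S α (S.Kt t) .omega
    | ofKeps {α : Ordinal.{0}} {t : Tm S.C} :
        LeadLt S α t S.bot → Sim S α (S.Kt t) .eps
    | ofF {α γ1 γ2 : Ordinal.{0}} (h1 : γ1 < α) (h2 : γ2 < α)
        {t1 t2 : Tm S.C} {τ1 τ2 : ETy B} :
        Sim S γ1 t1 τ1 → Sim S γ2 t2 τ2 → Sim S α (S.Ft t1 t2) (arrN τ1 τ2)
    | ofFom {α γ : Ordinal.{0}} (hγ : γ < α) {t1 t2 : Tm S.C} :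
        Sim S γ t1 .eps → Sim S α (S.Ft t1 t2) .omega

  /-- The relation `t ≻_α ρ` between terms and canonical terms (Definition 4.5). -/
  inductive Succ {B : Type} {D : B → Type} (S : CanSys B D) :
      Ordinal.{0} → Tm S.C → Tm S.C → Prop
    /- `ρ ≻_α ρ` for canonical `ρ` -/
    | refl {τ : ETy B} (hτ : τ ≠ .omega) {ρ : Tm S.C} (hρ : ρ ∈ S.TT τ)
        (α : Ordinal.{0}) : Succ S α ρ ρ
    /- `t ≻_α ρ` when `ρ` has canonical type `τ₁→τ₂` (possibly `τ₁ = ω`) and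
       `t t₁ ⇝_{<α} F(ρ)(t₁)` for all `t₁ ∈ T_{τ₁}` -/
    | fn {τ1 τ2 : ETy B} {ρ : Tm S.C} (hρ : ρ ∈ S.TT (.arr τ1 τ2))
        {α : Ordinal.{0}} {t : Tm S.C}
        (h : ∀ t1 ∈ S.TT τ1, LeadLt S α (.app t t1) (S.F τ1 τ2 ρ t1)) :
        Succ S α t ρ
    /- base postulates for `t ≻_α ⊤` -/
    | topLA (α : Ordinal.{0}) (b : B) : Succ S α (.app S.LT (S.AT b)) S.top
    | topLH (α : Ordinal.{0}) : Succ S α (.app S.LT S.Hterm) S.top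
    | topA {b : B} {c : Tm S.C} (hc : c ∈ S.TT (.base b)) (α : Ordinal.{0}) :
        Succ S α (.app (S.AT b) c) S.top
    | topH {c : Tm S.C} (hc : c = S.top ∨ c = S.bot) (α : Ordinal.{0}) :
        Succ S α (S.Ht c) S.top
    /- `(Ξ_i^⊤)` -/
    | xiTop {α : Ordinal.{0}} (hα : 0 < α) {t1 t2 : Tm S.C} {τ : ETy B}
        (h1 : Sim S α t1 τ) (h2 : ∀ t3 ∈ S.TT τ, LeadLt S α (.app t2 t3) S.top) :
        Succ S α (.app (.app S.XiT t1) t2) S.top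
    /- `(Ξ_H^⊤)` -/
    | xiHTop {α : Ordinal.{0}} (hα : 0 < α) {t1 t2 : Tm S.C} {τ : ETy B}
        (h1 : Sim S α t1 τ)
        (h2 : ∀ t3 ∈ S.TT τ, LeadLt S α (S.Ht (.app t2 t3)) S.top) :
        Succ S α (S.Ht (.app (.app S.XiT t1) t2)) S.top
    /- `(F_L^⊤)`, first case: `t₁ ∼_α ε` -/
    | flTopEps {α : Ordinal.{0}} (hα : 0 < α) {t1 t2 : Tm S.C}
        (h1 : Sim S α t1 .eps) :
        Succ S α (.app S.LT (S.Ft t1 t2)) S.top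
    /- `(F_L^⊤)`, second case: `t₁ ∼_α τ` for some `τ ≠ ε` and `L t₂ ⇝_{<α} ⊤` -/
    | flTop {α : Ordinal.{0}} (hα : 0 < α) {t1 t2 : Tm S.C} {τ : ETy B}
        (hτ : τ ≠ .eps) (h1 : Sim S α t1 τ) (h2 : LeadLt S α (.app S.LT t2) S.top) :
        Succ S α (.app S.LT (S.Ft t1 t2)) S.top
    /- `(H_i^⊤)` -/
    | hiTop {α : Ordinal.{0}} (hα : 0 < α) {t1 : Tm S.C} (h : LeadLt S α t1 S.top) :
        Succ S α (S.Ht t1) S.top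
    /- `(Ξ^⊥)` -/
    | xiBot {α : Ordinal.{0}} (hα : 0 < α) {t1 t2 : Tm S.C} {τ : ETy B}
        {γ : Ordinal.{0}} (hγ : γ < α)
        (hH : Succ S γ (S.Ht (.app (.app S.XiT t1) t2)) S.top)
        (h1 : Sim S α t1 τ) {t3 : Tm S.C} (h3 : t3 ∈ S.TT τ)
        (hb : LeadLt S α (.app t2 t3) S.bot) :
        Succ S α (.app (.app S.XiT t1) t2) S.bot
end

variable {B : Type} {D : B → Type}

/-- `t ≻ ρ` : the stable relation `≻_ζ` at the closure ordinal (by monotonicity,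
it equals the union of the `≻_α` over all ordinals `α`). -/
def SuccS (S : CanSys B D) (t ρ : Tm S.C) : Prop := ∃ α : Ordinal.{0}, Succ S α t ρ

/-- `t ∼ τ` : the stable typing relation. -/
def SimS (S : CanSys B D) (t : Tm S.C) (τ : ETy B) : Prop := ∃ α : Ordinal.{0}, Sim S α t τ

/-- One-step reduction of the stable reduction system `R`. -/
def StepR (S : CanSys B D) (t t' : Tm S.C) : Prop := ∃ α : Ordinal.{0}, Step S α t t'

/-- `t ↠_R t'` : many-step reduction in the stable reduction system `R`. -/
def StepsR (S : CanSys B D) : Tm S.C → Tm S.C → Prop := Relation.ReflTransGen (StepR S)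

/-- `t ⇝ ρ` : the stable relation `⇝_ζ`. -/
def LeadR (S : CanSys B D) (t ρ : Tm S.C) : Prop :=
  ∃ t', StepsR S t t' ∧ SuccS S t' ρ

/-- `t =_{≤α} t'` : convertibility in `R_α`. -/
def ConvLe (S : CanSys B D) (α : Ordinal.{0}) : Tm S.C → Tm S.C → Prop :=
  Relation.EqvGen (Step S α)

/-- `t =_R t'` : convertibility in the stable reduction system `R`. -/
def ConvR (S : CanSys B D) : Tm S.C → Tm S.C → Prop :=
  Relation.EqvGen (StepR S)

/-- Filling the boxes `□₁, …, □ₖ` of a `k`-ary context (a λ-term over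
`Σ⁺ ∪ {□₁, …, □ₖ}`) with terms, in such a way that the free variables of the
inserted terms do not become bound. -/
def fillk {C : Type} {k : Nat} (ts : Fin k → Tm C) : Tm (Fin k ⊕ C) → Tm C
  | .var n => .var n
  | .const (.inl i) => ts i
  | .const (.inr c) => .const c
  | .app a b => .app (fillk ts a) (fillk ts b)
  | .lam a => .lam (fillk (fun i => (ts i).lift) a)

/-- Filling a unary context. -/
def fill1 {C : Type} (Ctx : Tm (Fin 1 ⊕ C)) (t : Tm C) : Tm C :=
  fillk (fun _ => t) Ctx

/-- `t ≫^n t'` (at the stable level): there are a `k`-ary context `Cx`, terms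
`t₁, …, t_k` and canonical terms `ρ₁, …, ρ_k` of ranks `≤ n` with `tᵢ ≻ ρᵢ`,
`t = Cx[t₁,…,t_k]` and `t' = Cx[ρ₁,…,ρ_k]`. -/
def Gg (S : CanSys B D) (n : Nat) (t t' : Tm S.C) : Prop :=
  ∃ (k : Nat) (Cx : Tm (Fin k ⊕ S.C)) (ts ρs : Fin k → Tm S.C),
    (∀ i, SuccS S (ts i) (ρs i)) ∧
    (∀ i, ∃ τ : ETy B, τ ≠ .omega ∧ ρs i ∈ S.TT τ ∧ rank τ ≤ n) ∧
    t = fillk ts Cx ∧ t' = fillk ρs Cx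

/-! Reductions of `H t = L (λx. t)` take place inside `t` (this uses that `≻_α` and `∼_α` are
stable under substitution), so `H t ⇝_α ⊤` gives `t ↠_{≤α} s` with `H s ≻_α ⊤`. Besides the
base case `s ∈ {⊤, ⊥}`, this holds either by `(H_i^⊤)`, and then `t ⇝_α ⊤` at once, or by
`(Ξ_H^⊤)` with `s = Ξ t₁ t₂` (an instance of `(F_L^⊤)` at `H s` is one of `(Ξ_H^⊤)`). In the last
case either `t₂ t₃ ⇝_{<α} ⊤` for all `t₃ ∈ T_τ`, and `s ≻_α ⊤` by `(Ξ_i^⊤)`, or, by induction on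
`α`, `H (t₂ t₃) ⇝_γ ⊤` turns into `t₂ t₃ ⇝_{γ+1} ⊥` for some `t₃`, and `s ≻_{α+1} ⊥` by `(Ξ^⊥)`. -/

namespace Tm

variable {C : Type}

def HasVar : Tm C → Nat → Prop
  | .var m, n => m = n
  | .const _, _ => False
  | .app a b, n => a.HasVar n ∨ b.HasVar n
  | .lam a, n => a.HasVar (n + 1)

def varBound : Tm C → Nat
  | .var n => n + 1
  | .const _ => 0
  | .app a b => max a.varBound b.varBound
  | .lam a => a.varBound

theorem lt_varBound {t : Tm C} {n : Nat} (h : t.HasVar n) : n < t.varBound := by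
  induction t generalizing n with
  | var k => cases h; exact Nat.lt_succ_self _
  | const c => cases h
  | app a b iha ihb =>
      rcases h with h | h
      · exact (iha h).trans_le (le_max_left _ _)
      · exact (ihb h).trans_le (le_max_right _ _)
  | lam a ih => exact (Nat.lt_succ_self n).trans (ih h)

theorem rename_rename (f g : Nat → Nat) (t : Tm C) :
    (t.rename f).rename g = t.rename (g ∘ f) := by
  induction t generalizing f g with
  | var n => rfl
  | const c => rfl
  | app a b iha ihb => simp only [rename, iha, ihb]
  | lam a ih =>
      simp only [rename, ih]
      congr 2
      funext n
      cases n <;> rfl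

theorem hasVar_rename {f : Nat → Nat} {t : Tm C} {n : Nat} :
    (t.rename f).HasVar n ↔ ∃ m, t.HasVar m ∧ f m = n := by
  induction t generalizing f n with
  | var k => simp [rename, HasVar]
  | const c => simp [rename, HasVar]
  | app a b iha ihb =>
      simp only [rename, HasVar, iha, ihb]
      constructor
      · rintro (⟨m, hm, rfl⟩ | ⟨m, hm, rfl⟩)
        exacts [⟨m, .inl hm, rfl⟩, ⟨m, .inr hm, rfl⟩]
      · rintro ⟨m, hm | hm, rfl⟩
        exacts [.inl ⟨m, hm, rfl⟩, .inr ⟨m, hm, rfl⟩]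
  | lam a ih =>
      simp only [rename, HasVar, ih]
      constructor
      · rintro ⟨_ | m, hm, hfm⟩
        · exact absurd hfm.symm (Nat.succ_ne_zero n)
        · exact ⟨m, hm, Nat.succ_injective hfm⟩
      · rintro ⟨m, hm, rfl⟩
        exact ⟨m + 1, hm, rfl⟩

theorem hasVar_lift {t : Tm C} {n : Nat} : t.lift.HasVar (n + 1) ↔ t.HasVar n := by
  simp [lift, hasVar_rename]

theorem not_hasVar_zero_lift (t : Tm C) : ¬ t.lift.HasVar 0 := by
  simp [lift, hasVar_rename]

theorem bind_ext {σ σ' : Nat → Tm C} {t : Tm C} (h : ∀ n, t.HasVar n → σ n = σ' n) :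
    t.bind σ = t.bind σ' := by
  induction t generalizing σ σ' with
  | var n => exact h n rfl
  | const c => rfl
  | app a b iha ihb =>
      exact congrArg₂ Tm.app (iha fun n hn => h n (.inl hn)) (ihb fun n hn => h n (.inr hn))
  | lam a ih =>
      refine congrArg Tm.lam (ih fun n hn => ?_)
      cases n with
      | zero => rfl
      | succ m => exact congrArg Tm.lift (h m hn)

theorem bind_var (t : Tm C) : t.bind Tm.var = t := by
  induction t with
  | var n => rfl
  | const c => rfl
  | app a b iha ihb => simp only [bind, iha, ihb]
  | lam a ih =>
      simp only [bind]
      conv_rhs => rw [← ih]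
      congr 2
      funext n
      cases n <;> rfl

theorem bind_rename (f : Nat → Nat) (σ : Nat → Tm C) (t : Tm C) :
    (t.rename f).bind σ = t.bind (σ ∘ f) := by
  induction t generalizing f σ with
  | var n => rfl
  | const c => rfl
  | app a b iha ihb => simp only [rename, bind, iha, ihb]
  | lam a ih =>
      simp only [rename, bind, ih]
      congr 2
      funext n
      cases n <;> rfl

theorem rename_bind (f : Nat → Nat) (σ : Nat → Tm C) (t : Tm C) :
    (t.bind σ).rename f = t.bind (fun n => (σ n).rename f) := by
  induction t generalizing f σ with
  | var n => rfl
  | const c => rfl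
  | app a b iha ihb => simp only [rename, bind, iha, ihb]
  | lam a ih =>
      simp only [bind, rename, ih]
      congr 2
      funext n
      cases n with
      | zero => rfl
      | succ m => simp only [lift, rename_rename]; rfl

theorem bind_bind (σ τ : Nat → Tm C) (t : Tm C) :
    (t.bind σ).bind τ = t.bind (fun n => (σ n).bind τ) := by
  induction t generalizing σ τ with
  | var n => rfl
  | const c => rfl
  | app a b iha ihb => simp only [bind, iha, ihb]
  | lam a ih =>
      simp only [bind, ih]
      congr 2
      funext n
      cases n with
      | zero => rfl
      | succ m => simp only [lift, bind_rename, rename_bind]; rfl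

theorem rename_eq_bind (f : Nat → Nat) (t : Tm C) :
    t.rename f = t.bind (fun n => .var (f n)) := by
  conv_lhs => rw [← bind_var t, rename_bind]
  rfl

theorem lift_bind (σ : Nat → Tm C) (t : Tm C) :
    t.lift.bind (fun n => match n with | 0 => .var 0 | m + 1 => (σ m).lift)
      = (t.bind σ).lift := by
  simp only [lift, bind_rename, rename_bind]
  rfl

theorem subst0_lift (t s : Tm C) : t.lift.subst0 s = t := by
  simp only [subst0, lift, bind_rename]
  exact bind_var t

theorem lift_injective : Function.Injective (Tm.lift (C := C)) := fun a b h => by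
  rw [← subst0_lift a a, h, subst0_lift]

theorem exists_eq_lift {t : Tm C} (h : ¬ t.HasVar 0) : ∃ s : Tm C, t = s.lift := by
  refine ⟨t.subst0 t, ?_⟩
  simp only [subst0, lift, rename_bind]
  conv_lhs => rw [← bind_var t]
  refine bind_ext fun n hn => ?_
  cases n with
  | zero => exact absurd hn h
  | succ m => rfl

theorem bind_subst0 (σ : Nat → Tm C) (a s : Tm C) :
    (a.subst0 s).bind σ
      = (a.bind fun n => match n with | 0 => .var 0 | m + 1 => (σ m).lift).subst0 (s.bind σ) := by
  simp only [subst0, bind_bind]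
  congr 1
  funext n
  cases n with
  | zero => rfl
  | succ m => exact (subst0_lift (σ m) (s.bind σ)).symm

theorem hasVar_bind {σ : Nat → Tm C} {t : Tm C} {n : Nat} :
    (t.bind σ).HasVar n ↔ ∃ m, t.HasVar m ∧ (σ m).HasVar n := by
  induction t generalizing σ n with
  | var k => simp [bind, HasVar]
  | const c => simp [bind, HasVar]
  | app a b iha ihb =>
      simp only [bind, HasVar, iha, ihb]
      constructor
      · rintro (⟨m, hm, h⟩ | ⟨m, hm, h⟩)
        exacts [⟨m, .inl hm, h⟩, ⟨m, .inr hm, h⟩]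
      · rintro ⟨m, hm | hm, h⟩
        exacts [.inl ⟨m, hm, h⟩, .inr ⟨m, hm, h⟩]
  | lam a ih =>
      simp only [bind, HasVar, ih]
      constructor
      · rintro ⟨_ | m, hm, h⟩
        · exact absurd h (Nat.succ_ne_zero n).symm
        · exact ⟨m, hm, hasVar_lift.1 h⟩
      · rintro ⟨m, hm, h⟩
        exact ⟨m + 1, hm, hasVar_lift.2 h⟩

theorem lift_lift_eq_bind (t : Tm C) : t.lift.lift = t.bind (fun n => .var (n + 2)) := by
  rw [lift, lift, rename_rename, rename_eq_bind]
  rfl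

theorem bind_update_varBound (t x : Tm C) (σ : Nat → Tm C) :
    (Tm.app t (.var t.varBound)).bind (Function.update σ t.varBound x) = .app (t.bind σ) x := by
  change Tm.app (t.bind _) (Function.update σ t.varBound x t.varBound) = _
  rw [Function.update_self]
  exact congrArg (Tm.app · x) (bind_ext fun n hn => Function.update_of_ne (lt_varBound hn).ne _ _)

end Tm

theorem IsT1.ne_omega {τ : ETy B} (h : IsT1 τ) : τ ≠ .omega := by
  cases h <;> simp

namespace CanSys

variable (S : CanSys B D)

theorem isT1_of_mem {τ : ETy B} (hτ : τ ≠ .omega) {t : Tm S.C} (ht : t ∈ S.TT τ) : IsT1 τ := by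
  by_contra h
  simp [S.TT_invalid τ h hτ] at ht

theorem isT1_of_mem_arr {τ1 τ2 : ETy B} {ρ : Tm S.C} (hρ : ρ ∈ S.TT (.arr τ1 τ2)) :
    IsT1 τ2 := by
  cases S.isT1_of_mem (by simp) hρ with
  | arr _ h2 | omegaArr h2 => exact h2

theorem F_mem {τ1 τ2 : ETy B} {ρ : Tm S.C} (hρ : ρ ∈ S.TT (.arr τ1 τ2))
    {t : Tm S.C} (ht : t ∈ S.TT τ1) : S.F τ1 τ2 ρ t ∈ S.TT τ2 :=
  S.F_mapsto τ1 τ2 (S.isT1_of_mem (by simp) hρ) ρ hρ t ht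

theorem top_mem : S.top ∈ S.TT .o := by simp [S.TT_o]

theorem bot_mem : S.bot ∈ S.TT .o := by simp [S.TT_o]

theorem const_or_lam_of_mem {τ : ETy B} (hτ : τ ≠ .omega) {t : Tm S.C} (ht : t ∈ S.TT τ) :
    (∃ c, t = .const c) ∨ ∃ b, t = .lam b := by
  cases S.isT1_of_mem hτ ht with
  | omegaArr h2 =>
      rw [S.TT_omega_arr _ h2] at ht
      obtain ⟨ρ, -, rfl⟩ := ht
      exact .inr ⟨ρ, rfl⟩
  | _ =>
      exact .inl (S.TT_const _ (S.isT1_of_mem hτ ht) (by rintro _ ⟨⟩ <;> cases ‹IsT1 ETy.omega›)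
        t ht)

theorem not_hasVar_of_mem {τ : ETy B} (hτ : IsT1 τ) {t : Tm S.C} (ht : t ∈ S.TT τ) (n : Nat) :
    ¬ t.HasVar n := by
  induction hτ generalizing t n with
  | omegaArr h2 ih =>
      rw [S.TT_omega_arr _ h2] at ht
      obtain ⟨ρ, hρ, rfl⟩ := ht
      exact ih hρ (n + 1)
  | _ =>
      obtain ⟨c, rfl⟩ := S.TT_const _ (by constructor <;> assumption)
        (by rintro _ ⟨⟩ <;> cases ‹IsT1 ETy.omega›) t ht
      exact id

theorem bind_of_mem {τ : ETy B} (hτ : τ ≠ .omega) {t : Tm S.C} (ht : t ∈ S.TT τ)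
    (σ : Nat → Tm S.C) : t.bind σ = t := by
  conv_rhs => rw [← Tm.bind_var t]
  exact Tm.bind_ext fun n hn => absurd hn (S.not_hasVar_of_mem (S.isT1_of_mem hτ ht) ht n)

/-- The substitution `0 ↦ f x` performed in `F t₁ (λz.q₂)`, under the binders `f` and `x`. -/
abbrev ftSubst : Nat → Tm S.C := fun n => match n with
  | 0 => .app (.var 1) (.var 0)
  | m + 1 => .var (m + 2)

theorem lift_bind_ftSubst (t : Tm S.C) : t.lift.bind S.ftSubst = t.lift.lift := by
  rw [Tm.lift_lift_eq_bind, Tm.lift, Tm.bind_rename]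
  rfl

theorem bind_Kt (t : Tm S.C) (σ : Nat → Tm S.C) : (S.Kt t).bind σ = S.Kt (t.bind σ) :=
  congrArg Tm.lam (Tm.lift_bind σ t)

theorem bind_Ht (t : Tm S.C) (σ : Nat → Tm S.C) : (S.Ht t).bind σ = S.Ht (t.bind σ) :=
  congrArg (Tm.app S.LT) (S.bind_Kt t σ)

theorem bind_Ft_lam (t1 b : Tm S.C) (σ : Nat → Tm S.C) :
    (S.Ft t1 (.lam b)).bind σ = S.Ft (t1.bind σ) ((Tm.lam b).bind σ) := by
  change Tm.lam (.app (.app S.XiT (t1.lift.bind _)) (.lam ((b.bind S.ftSubst).bind _))) =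
    Tm.lam (.app (.app S.XiT (t1.bind σ).lift) (.lam ((b.bind _).bind S.ftSubst)))
  rw [Tm.lift_bind, Tm.bind_bind, Tm.bind_bind]
  congr 4
  funext n
  cases n with
  | zero => rfl
  | succ m => exact (S.lift_bind_ftSubst (σ m)).symm

theorem bind_Ft_const (t1 : Tm S.C) (c : S.C) (σ : Nat → Tm S.C) :
    (S.Ft t1 (.const c)).bind σ = S.Ft (t1.bind σ) (.const c) := by
  change Tm.lam (.app (.app S.XiT (t1.lift.bind _)) _) = _
  rw [Tm.lift_bind]
  rfl

theorem bind_Ft_of_not_lam (t1 t2 : Tm S.C)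
    (h : S.Ft t1 t2 =
      .lam (.app (.app S.XiT t1.lift) (.lam (.app t2.lift.lift (.app (.var 1) (.var 0))))))
    (σ : Nat → Tm S.C) :
    (S.Ft t1 t2).bind σ = S.Ft (t1.bind σ) (.lam (.app (t2.bind σ).lift (.var 0))) := by
  rw [h]
  change Tm.lam (.app (.app S.XiT (t1.lift.bind _)) (.lam (.app (t2.lift.lift.bind _) _))) =
    Tm.lam (.app _ (.lam (.app ((t2.bind σ).lift.bind S.ftSubst) _)))
  rw [Tm.lift_bind, Tm.lift_bind, Tm.lift_bind, lift_bind_ftSubst]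
  rfl

/-- When `t₂` is not an abstraction, substituting into `F t₁ t₂` can turn `t₂` into one; the
result is then `F` applied to the η-expansion of the substituted `t₂`. -/
theorem bind_Ft (t1 t2 : Tm S.C) (σ : Nat → Tm S.C) :
    ∃ v, (S.Ft t1 t2).bind σ = S.Ft (t1.bind σ) v ∧
      (v = t2.bind σ ∨ v = .lam (.app (t2.bind σ).lift (.var 0))) := by
  cases t2 with
  | lam b => exact ⟨_, S.bind_Ft_lam t1 b σ, .inl rfl⟩
  | const c => exact ⟨_, S.bind_Ft_const t1 c σ, .inl rfl⟩
  | var k => exact ⟨_, S.bind_Ft_of_not_lam t1 _ rfl σ, .inr rfl⟩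
  | app a b => exact ⟨_, S.bind_Ft_of_not_lam t1 _ rfl σ, .inr rfl⟩

theorem lift_Kt (t : Tm S.C) : (S.Kt t).lift = .lam t.lift.lift := by
  change Tm.lam ((t.rename _).rename _) = Tm.lam ((t.rename _).rename _)
  simp only [Tm.rename_rename]
  rfl

theorem Kt_injective : Function.Injective S.Kt :=
  fun _ _ h => Tm.lift_injective (Tm.lam.inj h)

theorem eq_Xi_of_Ft_eq_Kt {t1 t2 s : Tm S.C} (h : S.Ft t1 t2 = S.Kt s) :
    ∃ b, t2 = S.Kt b ∧ s = .app (.app S.XiT t1) t2 := by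
  have hs := Tm.not_hasVar_zero_lift s
  cases t2 with
  | lam b =>
      have hbody : Tm.app (.app S.XiT t1.lift) (.lam (b.bind S.ftSubst)) = s.lift := by
        injection h
      by_cases hb : b.HasVar 0
      · exact absurd (hbody ▸ .inr (Tm.hasVar_bind.2 ⟨0, hb, .inl rfl⟩)) hs
      · obtain ⟨b, rfl⟩ := Tm.exists_eq_lift hb
        refine ⟨b, rfl, Tm.lift_injective ?_⟩
        rw [← hbody, lift_bind_ftSubst]
        change _ = Tm.app (.app S.XiT t1.lift) (S.Kt b).lift
        rw [lift_Kt]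
  | _ =>
      injection h with hbody
      exact absurd (hbody ▸ .inr (.inr (.inl rfl))) hs

theorem bind_mem {τ : ETy B} {t : Tm S.C} (ht : t ∈ S.TT τ) (σ : Nat → Tm S.C) :
    t.bind σ ∈ S.TT τ := by
  by_cases hτ : τ = .omega
  · simp [hτ, S.TT_omega]
  · rwa [S.bind_of_mem hτ ht]

/-- For `τ = ω` the argument `x` is arbitrary, so it is obtained by substituting it for a fresh
variable. -/
theorem forall_mem_app_bind {Q : Tm S.C → Prop} (hQ : ∀ u σ, Q u → Q (u.bind σ)) {τ : ETy B}
    {t : Tm S.C} (h : ∀ x ∈ S.TT τ, Q (.app t x)) (σ : Nat → Tm S.C) :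
    ∀ x ∈ S.TT τ, Q (.app (t.bind σ) x) := by
  intro x hx
  by_cases hτ : τ = .omega
  · subst hτ
    rw [← Tm.bind_update_varBound]
    exact hQ _ _ (h _ (by simp [S.TT_omega]))
  · have := hQ _ σ (h x hx)
    rwa [Tm.bind, S.bind_of_mem hτ hx] at this

end CanSys

section Reduction

variable {S : CanSys B D} {α : Ordinal.{0}}

theorem Steps.reflTransGen {t u : Tm S.C} :
    Steps S α t u → Relation.ReflTransGen (Step S α) t u
  | .refl _ _ => .refl
  | .tail h hs => h.reflTransGen.tail hs

theorem steps_iff {t u : Tm S.C} : Steps S α t u ↔ Relation.ReflTransGen (Step S α) t u := by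
  refine ⟨Steps.reflTransGen, fun h => ?_⟩
  induction h with
  | refl => exact .refl _ _
  | tail _ hs ih => exact ih.tail hs

theorem Steps.trans {t u v : Tm S.C} (h1 : Steps S α t u) (h2 : Steps S α u v) :
    Steps S α t v :=
  steps_iff.2 (h1.reflTransGen.trans h2.reflTransGen)

theorem Steps.head {t u v : Tm S.C} (h1 : Step S α t u) (h2 : Steps S α u v) : Steps S α t v :=
  steps_iff.2 (h2.reflTransGen.head h1)

theorem Lead.head {t u ρ : Tm S.C} (h1 : Step S α t u) (h2 : Lead S α u ρ) : Lead S α t ρ := by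
  obtain ⟨hst, hsu⟩ := h2
  exact .mk (.head h1 hst) hsu

theorem Step.mono {α' : Ordinal.{0}} (hle : α ≤ α') {t u : Tm S.C} :
    Step S α t u → Step S α' t u
  | .beta _ t s => .beta _ t s
  | .eta _ t => .eta _ t
  | .crule hγ h1 hc hρ1 hs => .crule (hγ.trans_le hle) h1 hc hρ1 hs
  | .appL s h => .appL s (h.mono hle)
  | .appR t h => .appR t (h.mono hle)
  | .lam h => .lam (h.mono hle)

theorem Steps.mono {α' : Ordinal.{0}} (hle : α ≤ α') {t u : Tm S.C} (h : Steps S α t u) :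
    Steps S α' t u :=
  steps_iff.2 (Relation.ReflTransGen.mono (fun _ _ hs => Step.mono hle hs) _ _ h.reflTransGen)

theorem LeadLt.mono {α' : Ordinal.{0}} (hle : α ≤ α') {t ρ : Tm S.C} :
    LeadLt S α t ρ → LeadLt S α' t ρ
  | .mk hγ hl => .mk (hγ.trans_le hle) hl

theorem Sim.mono {α' : Ordinal.{0}} (hle : α ≤ α') {t : Tm S.C} {τ : ETy B} :
    Sim S α t τ → Sim S α' t τ
  | .ofA _ _ => .ofA _ _
  | .ofH _ => .ofH _
  | .ofKom h => .ofKom (h.mono hle)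
  | .ofKeps h => .ofKeps (h.mono hle)
  | .ofF h1 h2 s1 s2 => .ofF (h1.trans_le hle) (h2.trans_le hle) s1 s2
  | .ofFom hγ s1 => .ofFom (hγ.trans_le hle) s1

theorem Succ.mono {α' : Ordinal.{0}} (hle : α ≤ α') {t ρ : Tm S.C} :
    Succ S α t ρ → Succ S α' t ρ
  | .refl hτ hρ _ => .refl hτ hρ _
  | .fn hρ h => .fn hρ fun t1 ht1 => (h t1 ht1).mono hle
  | .topLA _ _ => .topLA _ _
  | .topLH _ => .topLH _
  | .topA hc _ => .topA hc _
  | .topH hc _ => .topH hc _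
  | .xiTop hα h1 h2 => .xiTop (hα.trans_le hle) (h1.mono hle) fun t3 ht3 => (h2 t3 ht3).mono hle
  | .xiHTop hα h1 h2 =>
      .xiHTop (hα.trans_le hle) (h1.mono hle) fun t3 ht3 => (h2 t3 ht3).mono hle
  | .flTopEps hα h1 => .flTopEps (hα.trans_le hle) (h1.mono hle)
  | .flTop hα hτ h1 h2 => .flTop (hα.trans_le hle) hτ (h1.mono hle) (h2.mono hle)
  | .hiTop hα h => .hiTop (hα.trans_le hle) (h.mono hle)
  | .xiBot hα hγ hH h1 h3 hb =>
      .xiBot (hα.trans_le hle) (hγ.trans_le hle) hH (h1.mono hle) h3 (hb.mono hle)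

theorem Step.hasVar_of_hasVar {t u : Tm S.C} :
    Step S α t u → ∀ {n}, u.HasVar n → t.HasVar n
  | .beta _ a s, n, h => by
      obtain ⟨_ | k, hm, hv⟩ := Tm.hasVar_bind.1 h
      · exact .inr hv
      · cases hv
        exact .inl hm
  | .eta _ t, _, h => .inl (Tm.hasVar_lift.2 h)
  | .crule _ _ hc hρ1 _, n, h =>
      absurd h (S.not_hasVar_of_mem (S.isT1_of_mem_arr hc) (S.F_mem hc hρ1) n)
  | .appL _ hs, _, h => h.imp_left hs.hasVar_of_hasVar
  | .appR _ hs, _, h => h.imp_right hs.hasVar_of_hasVar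
  | .lam hs, _, h => hs.hasVar_of_hasVar h

end Reduction

section Substitution

variable {S : CanSys B D} {α : Ordinal.{0}}

structure BindStable (S : CanSys B D) (α : Ordinal.{0}) : Prop where
  succ : ∀ {t ρ : Tm S.C}, Succ S α t ρ → ∀ σ, Succ S α (t.bind σ) ρ
  sim : ∀ {t : Tm S.C} {τ : ETy B}, Sim S α t τ → ∀ σ, Sim S α (t.bind σ) τ

theorem Step.bind_of (ih : ∀ γ < α, BindStable S γ) {t u : Tm S.C} :
    Step S α t u → ∀ σ, Step S α (t.bind σ) (u.bind σ)
  | .beta _ a s, σ => by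
      rw [Tm.bind_subst0]
      exact .beta _ _ _
  | .eta _ t, σ => by
      change Step S α (.lam (.app (t.lift.bind _) (.var 0))) (t.bind σ)
      rw [Tm.lift_bind]
      exact .eta _ _
  | .crule hγ h1 hc hρ1 hs, σ => by
      change Step S α (.app (Tm.bind σ _) (Tm.bind σ _)) (Tm.bind σ _)
      rw [S.bind_of_mem (by simp) hc,
        S.bind_of_mem (S.isT1_of_mem_arr hc).ne_omega (S.F_mem hc hρ1)]
      exact .crule hγ h1 hc hρ1 ((ih _ hγ).succ hs σ)
  | .appL s h, σ => .appL _ (h.bind_of ih σ)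
  | .appR t h, σ => .appR _ (h.bind_of ih σ)
  | .lam h, _ => .lam (h.bind_of ih _)

theorem Steps.bind_of (ih : ∀ γ < α, BindStable S γ) {t u : Tm S.C} (h : Steps S α t u)
    (σ : Nat → Tm S.C) : Steps S α (t.bind σ) (u.bind σ) :=
  steps_iff.2 (Relation.ReflTransGen.lift (Tm.bind σ) (fun _ _ hs => hs.bind_of ih σ) _ _
    h.reflTransGen)

theorem LeadLt.bind_of (ih : ∀ γ < α, BindStable S γ) {t ρ : Tm S.C} :
    LeadLt S α t ρ → ∀ σ, LeadLt S α (t.bind σ) ρ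
  | .mk hγ (.mk hst hsu), σ =>
      .mk hγ (.mk (hst.bind_of (fun δ hδ => ih δ (hδ.trans hγ)) σ) ((ih _ hγ).succ hsu σ))

theorem Sim.const_or_lam {t : Tm S.C} {τ : ETy B} (h : Sim S α t τ) :
    (∃ c, t = .const c) ∨ ∃ b, t = .lam b := by
  cases h
  · exact .inl ⟨_, rfl⟩
  all_goals exact .inr ⟨_, rfl⟩

theorem Sim.bind_of (ih : ∀ γ < α, BindStable S γ) {t : Tm S.C} {τ : ETy B} :
    Sim S α t τ → ∀ σ, Sim S α (t.bind σ) τ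
  | .ofA _ _, _ => .ofA _ _
  | .ofH _, _ => .ofH _
  | .ofKom h, σ => S.bind_Kt _ σ ▸ .ofKom (h.bind_of ih σ)
  | .ofKeps h, σ => S.bind_Kt _ σ ▸ .ofKeps (h.bind_of ih σ)
  | .ofF h1 h2 s1 s2, σ => by
      rcases s2.const_or_lam with ⟨c, rfl⟩ | ⟨b, rfl⟩
      · rw [S.bind_Ft_const]
        exact .ofF h1 h2 ((ih _ h1).sim s1 σ) s2
      · rw [S.bind_Ft_lam]
        exact .ofF h1 h2 ((ih _ h1).sim s1 σ) ((ih _ h2).sim s2 σ)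
  | .ofFom hγ s1, σ => by
      obtain ⟨v, hv, -⟩ := S.bind_Ft _ _ σ
      rw [hv]
      exact .ofFom hγ ((ih _ hγ).sim s1 σ)

theorem Succ.bind_of (ih : ∀ γ < α, BindStable S γ) {t ρ : Tm S.C}
    (h : Succ S α t ρ) (σ : Nat → Tm S.C) : Succ S α (t.bind σ) ρ := by
  have leadLt_stable : ∀ {ρ : Tm S.C} u σ, LeadLt S α u ρ → LeadLt S α (u.bind σ) ρ :=
    fun _ σ h => h.bind_of ih σ
  cases h with
  | refl hτ hρ => rw [S.bind_of_mem hτ hρ]; exact .refl hτ hρ _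
  | @fn τ1 τ2 ρ hρ _ t h =>
      by_cases hω : τ1 = .omega
      · subst hω
        obtain ⟨ρ2, hρ2, rfl⟩ : ρ ∈ Tm.lam '' S.TT τ2 :=
          S.TT_omega_arr _ (S.isT1_of_mem_arr hρ) ▸ hρ
        simp only [S.F_omega τ2 ρ2 hρ2] at h
        refine .fn hρ fun t1 ht1 => ?_
        rw [S.F_omega τ2 ρ2 hρ2]
        exact S.forall_mem_app_bind leadLt_stable h σ t1 ht1
      · refine .fn hρ fun t1 ht1 => ?_
        have := (h t1 ht1).bind_of ih σ
        rwa [Tm.bind, S.bind_of_mem hω ht1] at this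
  | topLA => exact .topLA _ _
  | topLH => exact .topLH _
  | topA hc =>
      change Succ S α (.app _ (Tm.bind σ _)) _
      rw [S.bind_of_mem (by simp) hc]
      exact .topA hc _
  | topH hc =>
      rw [S.bind_Ht, S.bind_of_mem (τ := .o) (by simp)
        (hc.elim (· ▸ S.top_mem) (· ▸ S.bot_mem))]
      exact .topH hc _
  | xiTop hα h1 h2 =>
      exact .xiTop hα (h1.bind_of ih σ) (S.forall_mem_app_bind leadLt_stable h2 σ)
  | xiHTop hα h1 h2 =>
      rw [S.bind_Ht]
      refine .xiHTop hα (h1.bind_of ih σ)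
        (S.forall_mem_app_bind (Q := fun u => LeadLt S α (S.Ht u) S.top) (fun u σ h => ?_) h2 σ)
      exact S.bind_Ht u σ ▸ h.bind_of ih σ
  | flTopEps hα h1 =>
      obtain ⟨v, hv, -⟩ := S.bind_Ft _ _ σ
      change Succ S α (.app S.LT (Tm.bind σ _)) _
      rw [hv]
      exact .flTopEps hα (h1.bind_of ih σ)
  | @flTop _ hα t1 t2 τ hτ h1 h2 =>
      obtain ⟨v, hv, hv'⟩ := S.bind_Ft t1 t2 σ
      change Succ S α (.app S.LT (Tm.bind σ _)) _
      rw [hv]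
      refine .flTop hα hτ (h1.bind_of ih σ) ?_
      obtain ⟨hγ, hl⟩ := h2.bind_of ih σ
      rcases hv' with rfl | rfl
      · exact .mk hγ hl
      · exact .mk hγ (.head (.appR S.LT (.eta _ _)) hl)
  | hiTop hα h =>
      rw [S.bind_Ht]
      exact .hiTop hα (h.bind_of ih σ)
  | xiBot hα hγ hH h1 h3 hb =>
      have hH' := (ih _ hγ).succ hH σ
      rw [S.bind_Ht] at hH'
      exact .xiBot hα hγ hH' (h1.bind_of ih σ) (S.bind_mem h3 σ) (hb.bind_of ih σ)

theorem bindStable (S : CanSys B D) (α : Ordinal.{0}) : BindStable S α := by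
  induction α using WellFoundedLT.induction with
  | _ α ih => exact ⟨fun h σ => h.bind_of ih σ, fun h σ => h.bind_of ih σ⟩

theorem Step.bind {t u : Tm S.C} (h : Step S α t u) (σ : Nat → Tm S.C) :
    Step S α (t.bind σ) (u.bind σ) :=
  h.bind_of (fun γ _ => bindStable S γ) σ

end Substitution

section HInversion

variable {S : CanSys B D} {α : Ordinal.{0}}

theorem Step.lift {t u : Tm S.C} (h : Step S α t u) : Step S α t.lift u.lift := by
  simpa only [Tm.lift, Tm.rename_eq_bind] using h.bind _

theorem Step.unlift {t u : Tm S.C} (h : Step S α t.lift u) : ∃ s, u = s.lift ∧ Step S α t s := by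
  obtain ⟨s, rfl⟩ := Tm.exists_eq_lift fun hu => Tm.not_hasVar_zero_lift t (h.hasVar_of_hasVar hu)
  refine ⟨s, rfl, ?_⟩
  have := h.bind (fun n => match n with | 0 => t | m + 1 => .var m)
  change Step S α (t.lift.subst0 t) (s.lift.subst0 t) at this
  rwa [Tm.subst0_lift, Tm.subst0_lift] at this

theorem Step.Ht {t u : Tm S.C} (h : Step S α t u) : Step S α (S.Ht t) (S.Ht u) :=
  .appR _ (.lam h.lift)

theorem Step.of_Ht {t u : Tm S.C} (h : Step S α (S.Ht t) u) :
    ∃ s, u = S.Ht s ∧ Step S α t s := by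
  generalize hK : S.Kt t = k at h
  cases h with
  | crule _ _ hc => exact absurd hc (S.prim_notin _ (by simp)).2.1
  | appL _ h => cases h
  | appR _ h =>
      subst hK
      change Step S α (.lam t.lift) _ at h
      generalize hb : t.lift = b at h
      cases h with
      | eta w => exact absurd (hb ▸ .inr rfl) (Tm.not_hasVar_zero_lift t)
      | lam h =>
          subst hb
          obtain ⟨s, rfl, hs⟩ := h.unlift
          exact ⟨s, rfl, hs⟩

theorem Steps.of_Ht {t u : Tm S.C} (h : Steps S α (S.Ht t) u) :
    ∃ s, u = S.Ht s ∧ Steps S α t s := by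
  have hr := h.reflTransGen
  clear h
  induction hr with
  | refl => exact ⟨t, rfl, .refl _ _⟩
  | tail _ hs ih =>
      obtain ⟨s, rfl, hts⟩ := ih
      obtain ⟨s', rfl, hss'⟩ := hs.of_Ht
      exact ⟨s', rfl, hts.tail hss'⟩

theorem Step.beta_Kt (t u : Tm S.C) : Step S α (.app (S.Kt t) u) t := by
  have := Step.beta (S := S) α t.lift u
  rwa [Tm.subst0_lift] at this

/-- The rules `(F_L^⊤)` apply to `H s` only in instances of `(Ξ_H^⊤)`. -/
theorem Succ.cases_Ht_top {s : Tm S.C} (h : Succ S α (S.Ht s) S.top) :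
    s = S.top ∨ s = S.bot ∨ (0 < α ∧ LeadLt S α s S.top) ∨
      ∃ t1 t2 τ, s = .app (.app S.XiT t1) t2 ∧ 0 < α ∧ Sim S α t1 τ ∧
        ∀ t3 ∈ S.TT τ, LeadLt S α (S.Ht (.app t2 t3)) S.top := by
  generalize hρ : S.top = ρ at h
  generalize hu : S.Ht s = u at h
  cases h with
  | refl hτ hρm =>
      rcases S.const_or_lam_of_mem hτ hρm with ⟨c, hc⟩ | ⟨b, hb⟩
      · cases hu.trans hc
      · cases hu.trans hb
  | fn hρm =>
      subst hρ
      exact absurd hρm (Set.disjoint_left.1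
        (S.TT_disj .o (.arr _ _) (by simp) (by simp) (by simp)) S.top_mem)
  | topLA => cases hu
  | topLH =>
      injection hu with _ hK
      injection hK with hK
      exact absurd (hK ▸ .inr rfl) (Tm.not_hasVar_zero_lift s)
  | topA =>
      injection hu with hL
      injection hL with hL
      exact absurd hL (S.hLA _)
  | topH hc =>
      injection hu with _ hK
      obtain rfl := S.Kt_injective hK
      exact hc.elim .inl (.inr ∘ .inl)
  | xiTop => cases hu
  | xiHTop hα h1 h2 =>
      injection hu with _ hK
      exact .inr (.inr (.inr ⟨_, _, _, S.Kt_injective hK, hα, h1, h2⟩))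
  | flTopEps hα h1 =>
      injection hu with _ hK
      obtain ⟨b, rfl, rfl⟩ := S.eq_Xi_of_Ft_eq_Kt hK.symm
      refine .inr (.inr (.inr ⟨_, _, _, rfl, hα, h1, fun t3 ht3 => ?_⟩))
      simp [S.TT_eps] at ht3
  | flTop hα _ h1 h2 =>
      injection hu with _ hK
      obtain ⟨b, rfl, rfl⟩ := S.eq_Xi_of_Ft_eq_Kt hK.symm
      obtain ⟨hγ, hl⟩ := h2
      exact .inr (.inr (.inr ⟨_, _, _, rfl, hα, h1,
        fun t3 _ => .mk hγ (.head (Step.beta_Kt b t3).Ht hl)⟩))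
  | hiTop hα h =>
      injection hu with _ hK
      obtain rfl := S.Kt_injective hK
      exact .inr (.inr (.inl ⟨hα, h⟩))
  | xiBot => exact absurd hρ S.top_ne_bot

end HInversion

theorem succ_Xi_top_or_bot {S : CanSys B D} {α : Ordinal.{0}}
    (ih : ∀ γ < α, ∀ t, Lead S γ (S.Ht t) S.top → Lead S γ t S.top ∨ Lead S (γ + 1) t S.bot)
    {t1 t2 : Tm S.C} {τ : ETy B} (hα : 0 < α) (h1 : Sim S α t1 τ)
    (h2 : ∀ t3 ∈ S.TT τ, LeadLt S α (S.Ht (.app t2 t3)) S.top) :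
    Succ S α (.app (.app S.XiT t1) t2) S.top ∨
      Succ S (α + 1) (.app (.app S.XiT t1) t2) S.bot := by
  by_cases hall : ∀ t3 ∈ S.TT τ, LeadLt S α (.app t2 t3) S.top
  · exact .inl (.xiTop hα h1 hall)
  push Not at hall
  obtain ⟨t3, ht3, hnot⟩ := hall
  obtain ⟨hγ, hlead⟩ := h2 t3 ht3
  refine .inr (.xiBot (by positivity) (lt_add_one α) (.xiHTop hα h1 h2) (h1.mono le_self_add)
    ht3 ?_)
  rcases ih _ hγ _ hlead with htop | hbot
  · exact absurd (.mk hγ htop) hnot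
  · exact .mk (by simpa using hγ) hbot

/-- **Lemma 4.17.**  If `H t ⇝_α ⊤` then `t ⇝_α ⊤` or `t ⇝_{α+1} ⊥`. -/
theorem h_top_lemma {B : Type} [Finite B] {D : B → Type} (hD : ∀ b, Nonempty (D b))
    (S : CanSys B D) (α : Ordinal.{0}) (t : Tm S.C)
    (h : Lead S α (S.Ht t) S.top) :
    Lead S α t S.top ∨ Lead S (α + 1) t S.bot := by
  induction α using WellFoundedLT.induction generalizing t with
  | _ α ih =>
  obtain ⟨hst, hsu⟩ := h
  obtain ⟨s, rfl, hts⟩ := hst.of_Ht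
  rcases hsu.cases_Ht_top with rfl | rfl | ⟨-, hγ, st, su⟩ | ⟨t1, t2, τ, rfl, hα, h1, h2⟩
  · exact .inl (.mk hts (.refl (by simp) S.top_mem α))
  · exact .inr (.mk (hts.mono le_self_add) (.refl (by simp) S.bot_mem _))
  · exact .inl (.mk (hts.trans (st.mono hγ.le)) (su.mono hγ.le))
  · rcases succ_Xi_top_or_bot ih hα h1 h2 with htop | hbot
    · exact .inl (.mk hts htop)
    · exact .inr (.mk (hts.mono le_self_add) hbot)

end ILM
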